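/- arXiv:2210.11936 — 3 statements merged into one kernel-verified Lean document; each statement's English description precedes it below -/
import Mathlib

section
/- Let Γ be a group acting on the even integral lattice Q by isometries, let ε and the family (η_φ)_{φ∈Γ} be as in the context, and define Q̄ := {α ∈ Q : η_{φ₁φ₂}(α) = η_{φ₁}(φ₂α)·η_{φ₂}(α) for all φ₁, φ₂ ∈ Γ}. Then Q̄ is an additive subgroup of Q, it contains 2Q (i.e. 2α ∈ Q̄ for every α ∈ Q), and it is Γ-invariant: φ(Q̄) ⊆ Q̄ for every φ ∈ Γ. -/
/-- The set `Q̄` of lattice elements on which the lifted automorphisms compose strictly. -/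
def QbarSet {Q Γ : Type*} [AddCommGroup Q] [Group Γ] [DistribMulAction Γ Q]
    (η : Γ → Q → ℤˣ) : Set Q :=
  {a | ∀ φ₁ φ₂ : Γ, η (φ₁ * φ₂) a = η φ₁ (φ₂ • a) * η φ₂ a}

theorem stmt_0 (Q : Type*) [AddCommGroup Q] [Module.Free ℤ Q] [Module.Finite ℤ Q]
    (B : Q → Q → ℤ)
    (hB1 : ∀ a a' b : Q, B (a + a') b = B a b + B a' b)
    (hB2 : ∀ a b b' : Q, B a (b + b') = B a b + B a b')
    (hBsymm : ∀ a b : Q, B a b = B b a)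
    (hBeven : ∀ a : Q, ∃ n : ℤ, B a a = 2 * n)
    (Γ : Type*) [Group Γ] [DistribMulAction Γ Q]
    (hisom : ∀ (φ : Γ) (a b : Q), B (φ • a) (φ • b) = B a b)
    (ε : Q → Q → ℤˣ)
    (hε1 : ∀ a a' b : Q, ε (a + a') b = ε a b * ε a' b)
    (hε2 : ∀ a b b' : Q, ε a (b + b') = ε a b * ε a b')
    (hεB : ∀ a b : Q, ε a b * ε b a = (-1 : ℤˣ) ^ B a b)
    (η : Γ → Q → ℤˣ)
    (hη1 : ∀ a : Q, η 1 a = 1)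
    (hη : ∀ (φ : Γ) (a b : Q),
      η φ (a + b) * ε (φ • a) (φ • b) = η φ a * η φ b * ε a b) :
    ∃ H : AddSubgroup Q,
      (H : Set Q) = QbarSet η ∧
      (∀ a : Q, 2 • a ∈ H) ∧
      (∀ (φ : Γ) (a : Q), a ∈ H → φ • a ∈ H) := by
  have sq : ∀ u : ℤˣ, u * u = 1 := Int.units_mul_self
  -- η φ 0 = 1
  have hη0 : ∀ φ : Γ, η φ 0 = 1 := by
    intro φ
    have h := hη φ 0 0
    simp only [add_zero, smul_zero] at h
    have h2 : η φ 0 = η φ 0 * η φ 0 := mul_right_cancel h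
    rw [sq] at h2
    rcases Int.units_eq_one_or (η φ 0) with h1 | h1
    · exact h1
    · rw [h1] at h2; exact absurd h2 (by decide)
  -- additivity formula
  have expand : ∀ (φ : Γ) (a b : Q),
      η φ (a + b) = η φ a * η φ b * ε a b * ε (φ • a) (φ • b) := by
    intro φ a b
    have h : η φ (a + b) * ε (φ • a) (φ • b) * ε (φ • a) (φ • b)
        = η φ a * η φ b * ε a b * ε (φ • a) (φ • b) := by rw [hη]
    rwa [mul_assoc (η φ (a + b)), sq, mul_one] at h
  -- membership lemmas
  have hzero : (0 : Q) ∈ QbarSet η := by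
    intro φ₁ φ₂
    simp [hη0]
  have hadd : ∀ a b : Q, a ∈ QbarSet η → b ∈ QbarSet η → a + b ∈ QbarSet η := by
    intro a b ha hb φ₁ φ₂
    have key : ∀ u1 u2 v1 v2 e f g : ℤˣ,
        u1 * u2 * (v1 * v2) * e * f = u1 * v1 * g * f * (u2 * v2 * e * g) := by decide
    rw [smul_add, expand (φ₁ * φ₂), expand φ₁, expand φ₂, ha, hb]
    simp only [mul_smul]
    exact key _ _ _ _ _ _ _
  have hneg : ∀ a : Q, a ∈ QbarSet η → -a ∈ QbarSet η := by
    intro a ha φ₁ φ₂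
    have key : ∀ u1 u2 x y z e f g : ℤˣ,
        1 = u1 * u2 * x * e * f → 1 = u1 * y * g * f → 1 = u2 * z * e * g →
        x = y * z := by decide
    have h := expand (φ₁ * φ₂) a (-a)
    have h1 := expand φ₁ (φ₂ • a) (-(φ₂ • a))
    have h2 := expand φ₂ a (-a)
    simp only [add_neg_cancel, hη0, smul_neg, mul_smul] at h h1 h2 ⊢
    rw [ha φ₁ φ₂] at h
    exact key _ _ _ _ _ _ _ _ h h1 h2
  have h2mem : ∀ a : Q, 2 • a ∈ QbarSet η := by
    intro a φ₁ φ₂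
    have key2 : ∀ a b c d e f : ℤˣ,
        a * a * b * c = d * d * e * c * (f * f * b * e) := by decide
    show η (φ₁ * φ₂) (2 • a) = η φ₁ (φ₂ • 2 • a) * η φ₂ (2 • a)
    rw [two_nsmul, smul_add, expand (φ₁ * φ₂), expand φ₁, expand φ₂]
    simp only [mul_smul]
    exact key2 _ _ _ _ _ _
  have hinv : ∀ (φ : Γ) (a : Q), a ∈ QbarSet η → φ • a ∈ QbarSet η := by
    intro φ a ha φ₁ φ₂
    have key3 : ∀ p q r s : ℤˣ, p * (q * r) = s * r → s = p * q := by decide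
    have h1 := ha (φ₁ * φ₂) φ
    rw [mul_assoc, ha φ₁ (φ₂ * φ), ha φ₂ φ, mul_smul] at h1
    exact key3 _ _ _ _ h1
  exact ⟨{ carrier := QbarSet η
           zero_mem' := hzero
           add_mem' := fun h1 h2 => hadd _ _ h1 h2
           neg_mem' := fun h1 => hneg _ h1 },
    rfl, h2mem, hinv⟩
end

section
/- For every α ∈ Q one has ∏_{j=0}^{N−1} η(σ^j α) = 1 if and only if Σ_{m=1}^{N−1} (α|σ^m α) ∈ 2ℤ. -/
/-!
Put `x j = σ ^ j α` and `S n = x 0 + ⋯ + x (n - 1)`. Since `σ (S n) = S (n + 1) - α`, the cocycle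
relation for `S (n + 1) = S n + x n` reads
`η (S (n + 1)) = η (S n) η (x n) · ε (S n, x n) / ε (S (n + 1), x (n + 1)) · ε (α, x (n + 1))`,
and the middle factors telescope. As `S N` is `σ`-fixed, `η (S N) = 1`, while
`ε (S N, α) = ∏ ε (x j, α)`; hence `∏ η (x j) = ∏_{1 ≤ j < N} ε (x j, α) / ε (α, x j)`, and each
factor is `(-1) ^ (α | x j)`.
-/

open Finset

section Cocycle

variable {Q M G : Type*} [AddCommGroup Q] [CommGroup M] [Monoid G] [DistribMulAction G Q]

theorem smul_sum_range_pow_smul_add (σ : G) (α : Q) (n : ℕ) :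
    σ • ∑ j ∈ range n, σ ^ j • α + α = ∑ j ∈ range (n + 1), σ ^ j • α := by
  simp only [sum_range_succ' _ n, smul_sum, ← mul_smul, ← pow_succ', pow_zero, one_smul]

theorem smul_sum_range_pow_smul_of_pow_smul_eq {σ : G} {α : Q} {N : ℕ} (hN : σ ^ N • α = α) :
    σ • ∑ j ∈ range N, σ ^ j • α = ∑ j ∈ range N, σ ^ j • α := by
  have h := smul_sum_range_pow_smul_add σ α N
  rwa [sum_range_succ, hN, add_left_inj] at h

theorem prod_range_succ_eq_prod_range_of_eq {f : ℕ → M} {n : ℕ} (h : f n = f 0) :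
    ∏ j ∈ range n, f (j + 1) = ∏ j ∈ range n, f j :=
  mul_right_cancel (b := f 0) <| by rw [← prod_range_succ', prod_range_succ, h]

variable {ε : Q → Q → M}

theorem map_sum_left_of_map_add_left (hε : ∀ a a' b, ε (a + a') b = ε a b * ε a' b)
    {ι : Type*} (s : Finset ι) (f : ι → Q) (b : Q) :
    ε (∑ i ∈ s, f i) b = ∏ i ∈ s, ε (f i) b := by
  induction s using Finset.cons_induction with
  | empty => simpa using hε 0 0 b
  | cons i s hi ih => rw [sum_cons, prod_cons, hε, ih]

theorem map_sub_left_of_map_add_left (hε : ∀ a a' b, ε (a + a') b = ε a b * ε a' b)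
    (a a' b : Q) : ε (a - a') b = ε a b / ε a' b :=
  eq_div_of_mul_eq' <| by rw [← hε, sub_add_cancel]

variable {η : Q → M} {σ : G}

theorem map_add_of_cocycle (hη : ∀ a b, η (a + b) * ε (σ • a) (σ • b) = η a * η b * ε a b)
    (a b : Q) : η (a + b) = η a * η b * (ε a b / ε (σ • a) (σ • b)) := by
  rw [← mul_div_assoc, eq_div_iff_mul_eq', hη]

theorem map_sum_range_of_cocycle
    (hη : ∀ a b, η (a + b) * ε (σ • a) (σ • b) = η a * η b * ε a b) (x : ℕ → Q) (n : ℕ) :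
    η (∑ j ∈ range n, x j) = ∏ j ∈ range n, η (x j) *
      (ε (∑ i ∈ range j, x i) (x j) / ε (σ • ∑ i ∈ range j, x i) (σ • x j)) := by
  induction n with
  | zero => simpa [div_self'] using map_add_of_cocycle hη 0 0
  | succ n ih => rw [sum_range_succ, map_add_of_cocycle hη, ih, prod_range_succ, mul_assoc]

theorem prod_range_pow_smul_of_cocycle (hε : ∀ a a' b, ε (a + a') b = ε a b * ε a' b)
    (hη : ∀ a b, η (a + b) * ε (σ • a) (σ • b) = η a * η b * ε a b) {α : Q} {N : ℕ}
    (hN : σ ^ N • α = α) (hfix : η (∑ j ∈ range N, σ ^ j • α) = 1) :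
    ∏ j ∈ range N, η (σ ^ j • α) = ∏ j ∈ Ico 1 N, ε (σ ^ j • α) α / ε α (σ ^ j • α) := by
  set x : ℕ → Q := fun j ↦ σ ^ j • α
  set S : ℕ → Q := fun n ↦ ∑ j ∈ range n, x j
  have hσS (j : ℕ) : σ • S j = S (j + 1) - α :=
    eq_sub_of_add_eq (smul_sum_range_pow_smul_add σ α j)
  have hσx (j : ℕ) : σ • x j = x (j + 1) := by simp only [x, smul_smul, ← pow_succ']
  have hcorr (j : ℕ) : ε (S j) (x j) / ε (σ • S j) (σ • x j) =
      ε (S j) (x j) / ε (S (j + 1)) (x (j + 1)) * ε α (x (j + 1)) := by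
    rw [hσS, hσx, map_sub_left_of_map_add_left hε, div_div_eq_mul_div, mul_div_right_comm]
  have htelescope : ∏ j ∈ range N, ε (S j) (x j) / ε (S (j + 1)) (x (j + 1)) =
      (∏ j ∈ range N, ε (x j) α)⁻¹ := by
    have hS0 : ε (S 0) (x 0) = 1 := by
      simpa [S] using map_sum_left_of_map_add_left hε ∅ x (x 0)
    have hSN : ε (S N) (x N) = ∏ j ∈ range N, ε (x j) α := by
      rw [show x N = α from hN]
      exact map_sum_left_of_map_add_left hε _ x α
    rw [prod_range_div' (fun j ↦ ε (S j) (x j)), hS0, hSN, one_div]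
  have hshift : ∏ j ∈ range N, ε α (x (j + 1)) = ∏ j ∈ range N, ε α (x j) :=
    prod_range_succ_eq_prod_range_of_eq (f := fun j ↦ ε α (x j)) (by simp [x, hN])
  have h : 1 = ∏ j ∈ range N, η (x j) * (ε (S j) (x j) / ε (σ • S j) (σ • x j)) :=
    hfix ▸ map_sum_range_of_cocycle hη x N
  rw [prod_mul_distrib, prod_congr rfl fun j _ ↦ hcorr j, prod_mul_distrib, htelescope, hshift,
    mul_left_comm, ← div_eq_inv_mul, eq_comm, div_eq_one] at h
  have hdiag : ∏ j ∈ Ico 1 N, ε (x j) α / ε α (x j) = ∏ j ∈ range N, ε (x j) α / ε α (x j) :=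
    prod_subset (fun j hj ↦ by simp at hj ⊢; omega) fun j hjN hj ↦ by
      obtain rfl : j = 0 := by simp at hjN hj; omega
      simp [x]
  rw [hdiag, prod_div_distrib]
  exact eq_div_of_mul_eq' h

end Cocycle

theorem Int.negOnePow_sum {ι : Type*} (s : Finset ι) (f : ι → ℤ) :
    (∑ i ∈ s, f i).negOnePow = ∏ i ∈ s, (f i).negOnePow := by
  induction s using Finset.cons_induction with
  | empty => rfl
  | cons i s hi ih => rw [sum_cons, prod_cons, Int.negOnePow_add, ih]

theorem stmt_1_general (Q : Type*) [AddCommGroup Q]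
    (B : Q → Q → ℤ)
    (hBsymm : ∀ a b : Q, B a b = B b a)
    (N : ℕ)
    (σ : Q ≃ₗ[ℤ] Q) (hσN : σ ^ N = 1)
    (ε : Q → Q → ℤˣ)
    (hε1 : ∀ a a' b : Q, ε (a + a') b = ε a b * ε a' b)
    (hεB : ∀ a b : Q, ε a b * ε b a = (-1 : ℤˣ) ^ B a b)
    (η : Q → ℤˣ)
    (hη : ∀ a b : Q, η (a + b) * ε (σ a) (σ b) = η a * η b * ε a b)
    (hηfix : ∀ b : Q, σ b = b → η b = 1)
    (α : Q) :
    (∏ j ∈ Finset.range N, η ((σ ^ j) α)) = 1 ↔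
      (2 : ℤ) ∣ ∑ m ∈ Finset.Ico 1 N, B α ((σ ^ m) α) := by
  have hαN : σ ^ N • α = α := by rw [hσN, one_smul]
  have hprod : ∏ j ∈ range N, η ((σ ^ j) α) =
      ∏ m ∈ Ico 1 N, ε ((σ ^ m) α) α / ε α ((σ ^ m) α) :=
    prod_range_pow_smul_of_cocycle (σ := σ) hε1 hη hαN
      (hηfix _ (smul_sum_range_pow_smul_of_pow_smul_eq hαN))
  have hsign (m : ℕ) : ε ((σ ^ m) α) α / ε α ((σ ^ m) α) = (B α ((σ ^ m) α)).negOnePow := by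
    rw [div_eq_mul_inv, Int.units_inv_eq_self, hεB, hBsymm]
    rfl
  rw [hprod, prod_congr rfl fun m _ ↦ hsign m, ← Int.negOnePow_sum, Int.negOnePow_eq_one_iff,
    even_iff_two_dvd]

theorem stmt_1 (Q : Type*) [AddCommGroup Q] [Module.Free ℤ Q] [Module.Finite ℤ Q]
    (B : Q → Q → ℤ)
    (hB1 : ∀ a a' b : Q, B (a + a') b = B a b + B a' b)
    (hB2 : ∀ a b b' : Q, B a (b + b') = B a b + B a b')
    (hBsymm : ∀ a b : Q, B a b = B b a)
    (hBeven : ∀ a : Q, ∃ n : ℤ, B a a = 2 * n)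
    (N : ℕ) (hN : 0 < N)
    (σ : Q ≃ₗ[ℤ] Q) (hσN : σ ^ N = 1)
    (hisom : ∀ a b : Q, B (σ a) (σ b) = B a b)
    (ε : Q → Q → ℤˣ)
    (hε1 : ∀ a a' b : Q, ε (a + a') b = ε a b * ε a' b)
    (hε2 : ∀ a b b' : Q, ε a (b + b') = ε a b * ε a b')
    (hεB : ∀ a b : Q, ε a b * ε b a = (-1 : ℤˣ) ^ B a b)
    (η : Q → ℤˣ)
    (hη : ∀ a b : Q, η (a + b) * ε (σ a) (σ b) = η a * η b * ε a b)
    (hηfix : ∀ b : Q, σ b = b → η b = 1)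
    (α : Q) :
    (∏ j ∈ Finset.range N, η ((σ ^ j) α)) = 1 ↔
      (2 : ℤ) ∣ ∑ m ∈ Finset.Ico 1 N, B α ((σ ^ m) α) :=
  stmt_1_general Q B hBsymm N σ hσN ε hε1 hεB η hη hηfix α
end

section
/- For all τ, ζ ∈ ℂ with Im τ > 0: (1 − e^{−2πiζ})·P(τ,ζ) = (1 − e^{2πiζ})·P(τ,−ζ); P(τ, ζ+1) = P(τ, ζ); and P(τ, ζ+τ) = P(τ, −ζ). -/
/-- `P(τ,ζ) = q^{1/12} ∏_{n≥1} (1 - e^{-2πiζ} q^n)(1 - e^{2πiζ} q^{n-1})`, `q = e^{2πiτ}`. -/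
noncomputable def Pfun (τ ζ : ℂ) : ℂ :=
  Complex.exp (Real.pi * Complex.I * τ / 6) *
    ∏' n : ℕ,
      ((1 - Complex.exp (-(2 * Real.pi * Complex.I * ζ)) *
            Complex.exp (2 * Real.pi * Complex.I * ((n : ℂ) + 1) * τ)) *
        (1 - Complex.exp (2 * Real.pi * Complex.I * ζ) *
            Complex.exp (2 * Real.pi * Complex.I * (n : ℂ) * τ)))

/-!
With `q = e^{2πiτ}`, `u = e^{-2πiζ}`, `v = e^{2πiζ}`, the product in `P(τ,ζ)` is
`(uq; q)_∞ (v; q)_∞`. Peeling off the `n = 0` factor, `(1 - u)(uq; q)_∞ = (u; q)_∞`, so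
`(1 - u) P(τ,ζ) = q^{1/12} (u; q)_∞ (v; q)_∞` is symmetric in `u ↔ v`, i.e. in `ζ ↔ -ζ`.
Shifting `ζ` by `τ` multiplies `v` by `q` and divides `u` by `q`, which swaps the roles of the
two Pochhammer symbols; shifting `ζ` by `1` changes neither `u` nor `v`.
-/

open Complex

noncomputable def jacobiProd {R : Type*} [CommRing R] [TopologicalSpace R] (q u v : R) : R :=
  ∏' n : ℕ, (1 - u * q ^ (n + 1)) * (1 - v * q ^ n)

section NormedCommRing

variable {R : Type*} [NormedCommRing R] [NormOneClass R] [CompleteSpace R] {q : R}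

theorem multipliable_one_sub_mul_pow (hq : ‖q‖ < 1) (a : R) :
    Multipliable fun n : ℕ => 1 - a * q ^ n := by
  simp_rw [sub_eq_add_neg]
  refine multipliable_one_add_of_summable <|
    ((summable_norm_geometric_of_norm_lt_one hq).mul_left ‖a‖).of_nonneg_of_le
      (fun _ => norm_nonneg _) fun n => ?_
  simpa only [norm_neg] using norm_mul_le a (q ^ n)

theorem multipliable_one_sub_mul_pow_succ (hq : ‖q‖ < 1) (a : R) :
    Multipliable fun n : ℕ => 1 - a * q ^ (n + 1) := by
  simpa only [pow_succ', mul_assoc] using multipliable_one_sub_mul_pow hq (a * q)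

theorem tprod_one_sub_mul_pow (hq : ‖q‖ < 1) (a : R) :
    ∏' n : ℕ, (1 - a * q ^ n) = (1 - a) * ∏' n : ℕ, (1 - a * q ^ (n + 1)) := by
  rw [tprod_eq_zero_mul' (f := fun n => 1 - a * q ^ n) (multipliable_one_sub_mul_pow_succ hq a),
    pow_zero, mul_one]

theorem one_sub_mul_jacobiProd (hq : ‖q‖ < 1) (u v : R) :
    (1 - u) * jacobiProd q u v = (∏' n : ℕ, (1 - u * q ^ n)) * ∏' n : ℕ, (1 - v * q ^ n) := by
  rw [jacobiProd, (multipliable_one_sub_mul_pow_succ hq u).tprod_mul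
    (multipliable_one_sub_mul_pow hq v), ← mul_assoc, ← tprod_one_sub_mul_pow hq]

theorem one_sub_mul_jacobiProd_comm (hq : ‖q‖ < 1) (u v : R) :
    (1 - u) * jacobiProd q u v = (1 - v) * jacobiProd q v u := by
  rw [one_sub_mul_jacobiProd hq, one_sub_mul_jacobiProd hq, mul_comm]

end NormedCommRing

theorem jacobiProd_mul_right {R : Type*} [CommRing R] [TopologicalSpace R] (q u v : R) :
    jacobiProd q u (v * q) = jacobiProd q v (u * q) := by
  unfold jacobiProd
  exact tprod_congr fun n => by ring

theorem Pfun_eq_jacobiProd (τ ζ : ℂ) :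
    Pfun τ ζ = exp (Real.pi * I * τ / 6) *
      jacobiProd (exp (2 * Real.pi * I * τ)) (exp (-(2 * Real.pi * I * ζ)))
        (exp (2 * Real.pi * I * ζ)) := by
  rw [Pfun, jacobiProd]
  refine congrArg _ (tprod_congr fun n => ?_)
  simp only [← exp_nat_mul]
  push_cast
  ring_nf

theorem Pfun_neg (τ ζ : ℂ) :
    Pfun τ (-ζ) = exp (Real.pi * I * τ / 6) *
      jacobiProd (exp (2 * Real.pi * I * τ)) (exp (2 * Real.pi * I * ζ))
        (exp (-(2 * Real.pi * I * ζ))) := by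
  simp only [Pfun_eq_jacobiProd, mul_neg, neg_neg]

theorem Pfun_add_one (τ ζ : ℂ) : Pfun τ (ζ + 1) = Pfun τ ζ := by
  have hv : exp (2 * Real.pi * I * (ζ + 1)) = exp (2 * Real.pi * I * ζ) := by
    rw [mul_add, mul_one, exp_add, exp_two_pi_mul_I, mul_one]
  rw [Pfun_eq_jacobiProd, Pfun_eq_jacobiProd, exp_neg, hv, ← exp_neg]

theorem Pfun_add_self (τ ζ : ℂ) : Pfun τ (ζ + τ) = Pfun τ (-ζ) := by
  have hv : exp (2 * Real.pi * I * (ζ + τ)) =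
      exp (2 * Real.pi * I * ζ) * exp (2 * Real.pi * I * τ) := by
    rw [← exp_add, mul_add]
  have hu : exp (-(2 * Real.pi * I * (ζ + τ))) * exp (2 * Real.pi * I * τ) =
      exp (-(2 * Real.pi * I * ζ)) := by
    rw [← exp_add]
    ring_nf
  rw [Pfun_eq_jacobiProd, Pfun_neg, hv, jacobiProd_mul_right, hu]

theorem stmt_11 (τ ζ : ℂ) (hτ : 0 < τ.im) :
    (1 - Complex.exp (-(2 * Real.pi * Complex.I * ζ))) * Pfun τ ζ =
        (1 - Complex.exp (2 * Real.pi * Complex.I * ζ)) * Pfun τ (-ζ) ∧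
      Pfun τ (ζ + 1) = Pfun τ ζ ∧
      Pfun τ (ζ + τ) = Pfun τ (-ζ) := by
  refine ⟨?_, Pfun_add_one τ ζ, Pfun_add_self τ ζ⟩
  rw [Pfun_eq_jacobiProd, Pfun_neg, mul_left_comm,
    one_sub_mul_jacobiProd_comm (UpperHalfPlane.norm_exp_two_pi_I_lt_one ⟨τ, hτ⟩), mul_left_comm]
end
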